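/- arXiv:1210.7139 — 5 statements merged into one kernel-verified Lean document; each statement's English description precedes it below -/
import Mathlib

section
/- Let f be a smooth vector field on ℝ^d and V a smooth function such that V is nonincreasing along trajectories of f. Define M = {x : L_f^k V(x) = 0 for all k ≥ 1}. Then M = {x : L_f^{2k+1} V(x) = 0 for all k ≥ 0}, i.e. vanishing of all odd iterated Lie derivatives implies vanishing of all iterated Lie derivatives. -/
open Set

/-- Iterated Lie derivative of `V` along the vector field `f`. -/
noncomputable def lieDerivIter {d : ℕ} (f : (Fin d → ℝ) → (Fin d → ℝ))
    (V : (Fin d → ℝ) → ℝ) : ℕ → ((Fin d → ℝ) → ℝ)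
  | 0 => V
  | k + 1 => fun x => fderiv ℝ (lieDerivIter f V k) x (f x)

lemma lieDerivIter_contDiff {d : ℕ} {f : (Fin d → ℝ) → (Fin d → ℝ)}
    {V : (Fin d → ℝ) → ℝ} (hf : ContDiff ℝ (⊤ : ℕ∞) f) (hV : ContDiff ℝ (⊤ : ℕ∞) V) (k : ℕ) :
    ContDiff ℝ (⊤ : ℕ∞) (lieDerivIter f V k) := by
  induction k with
  | zero => exact hV
  | succ k ih => exact (ih.fderiv_right (by simp)).clm_apply hf

/-- One-sided key lemma via Taylor's theorem with Lagrange remainder. -/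
lemma keyB (u : ℕ → ℝ → ℝ) (ε : ℝ) (hε : 0 < ε)
    (hu : ∀ j, ∀ t ∈ Ioo (-ε) ε, HasDerivAt (u j) (u (j+1) t) t)
    (hneg : ∀ t ∈ Ioo (-ε) ε, u 0 t ≤ 0)
    (m : ℕ) (hm : ∀ j < m, u j 0 = 0) : u m 0 ≤ 0 := by
  by_contra hpos
  push_neg at hpos
  have h0mem : (0:ℝ) ∈ Ioo (-ε) ε := ⟨by linarith, hε⟩
  rcases m with _ | n
  · exact absurd (hneg 0 h0mem) (not_le.mpr hpos)
  -- continuity gives positivity near 0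
  have hc : ContinuousAt (u (n+1)) 0 := (hu (n+1) 0 h0mem).continuousAt
  have hev : ∀ᶠ s in nhds (0:ℝ), 0 < u (n+1) s := hc.eventually (eventually_gt_nhds hpos)
  obtain ⟨δ, hδ, hδpos⟩ := Metric.eventually_nhds_iff.mp hev
  set t : ℝ := min (δ/2) (ε/2) with ht_def
  have ht0 : 0 < t := lt_min (by linarith) (by linarith)
  have htδ : t < δ := lt_of_le_of_lt (min_le_left _ _) (by linarith)
  have htε : t < ε := lt_of_le_of_lt (min_le_right _ _) (by linarith)
  have hIcc : Icc (0:ℝ) t ⊆ Ioo (-ε) ε := fun s hs =>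
    ⟨by have := hs.1; linarith, lt_of_le_of_lt hs.2 htε⟩
  have hupos : ∀ s ∈ Icc (0:ℝ) t, 0 < u (n+1) s := by
    intro s hs
    apply hδpos
    simp only [dist_zero_right, Real.norm_eq_abs]
    rw [abs_of_nonneg hs.1]
    exact lt_of_le_of_lt hs.2 htδ
  -- iterated derivatives within Icc 0 t agree with u j
  have heq : ∀ j, ∀ s ∈ Icc (0:ℝ) t, iteratedDerivWithin j (u 0) (Icc 0 t) s = u j s := by
    intro j
    induction j with
    | zero => intro s _; simp [iteratedDerivWithin_zero]
    | succ j ih =>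
      intro s hs
      rw [iteratedDerivWithin_succ,
        derivWithin_congr (fun y hy => ih y hy) (ih s hs)]
      exact (hu j s (hIcc hs)).hasDerivWithinAt.derivWithin (uniqueDiffOn_Icc ht0 s hs)
  -- smoothness
  have hcd : ∀ (N : ℕ) (j : ℕ), ContDiffOn ℝ N (u j) (Ioo (-ε) ε) := by
    intro N
    induction N with
    | zero =>
      intro j
      rw [show ((0:ℕ) : WithTop ℕ∞) = 0 by norm_cast, contDiffOn_zero]
      exact fun s hs => (hu j s hs).continuousAt.continuousWithinAt
    | succ N ih =>
      intro j
      rw [show ((N+1 : ℕ) : WithTop ℕ∞) = (N : WithTop ℕ∞) + 1 by norm_cast,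
        contDiffOn_succ_iff_deriv_of_isOpen isOpen_Ioo]
      refine ⟨fun s hs => (hu j s hs).differentiableAt.differentiableWithinAt,
        by intro h; exact absurd h (by norm_cast), ?_⟩
      exact (ih (j+1)).congr fun s hs => (hu j s hs).deriv
  -- Taylor polynomial vanishes
  have htay : taylorWithinEval (u 0) n (Icc 0 t) 0 t = 0 := by
    rw [taylor_within_apply]
    apply Finset.sum_eq_zero
    intro j hj
    rw [heq j 0 (left_mem_Icc.mpr ht0.le), hm j (Finset.mem_range.mp hj)]
    simp
  have hdiff' : DifferentiableOn ℝ (iteratedDerivWithin n (u 0) (Icc 0 t)) (Ioo 0 t) := by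
    intro s hs
    have hs' : s ∈ Icc (0:ℝ) t := Ioo_subset_Icc_self hs
    exact ((hu n s (hIcc hs')).differentiableAt.differentiableWithinAt).congr
      (fun y hy => heq n y (Ioo_subset_Icc_self hy)) (heq n s hs')
  obtain ⟨ξ, hξ, hT⟩ := taylor_mean_remainder_lagrange (f := u 0) (x₀ := 0) (x := t) ht0.ne
    (by rw [uIcc_of_le ht0.le]; exact (hcd n 0).mono hIcc)
    (by rw [uIcc_of_le ht0.le, uIoo_of_le ht0.le]; exact hdiff')
  rw [uIcc_of_le ht0.le] at hT
  rw [uIoo_of_le ht0.le] at hξ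
  rw [htay, sub_zero, heq (n+1) ξ ⟨hξ.1.le, hξ.2.le⟩] at hT
  have : 0 < u 0 t := by
    rw [hT, sub_zero]
    have h1 : 0 < u (n+1) ξ := hupos ξ ⟨hξ.1.le, hξ.2.le⟩
    exact div_pos (mul_pos h1 (pow_pos ht0 _)) (by positivity)
  exact absurd (hneg t (hIcc (right_mem_Icc.mpr ht0.le))) (not_le.mpr this)

theorem stmt7 {d : ℕ} (f : (Fin d → ℝ) → (Fin d → ℝ)) (V : (Fin d → ℝ) → ℝ)
    (hf : ContDiff ℝ (⊤ : ℕ∞) f) (hV : ContDiff ℝ (⊤ : ℕ∞) V)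
    (htraj : ∀ x : Fin d → ℝ, ∃ ε > 0, ∃ φ : ℝ → (Fin d → ℝ), φ 0 = x ∧
      (∀ t ∈ Ioo (-ε) ε, HasDerivAt φ (f (φ t)) t) ∧
      AntitoneOn (fun t => V (φ t)) (Ico 0 ε)) :
    {x | ∀ k ≥ 1, lieDerivIter f V k x = 0} =
      {x | ∀ k : ℕ, lieDerivIter f V (2 * k + 1) x = 0} := by
  -- L_f V ≤ 0 everywhere
  have hL1 : ∀ y, lieDerivIter f V 1 y ≤ 0 := by
    intro y
    obtain ⟨ε, hε, φ, hφ0, hφ', hmono⟩ := htraj y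
    have h0mem : (0:ℝ) ∈ Ioo (-ε) ε := ⟨by linarith, hε⟩
    have h0 : HasDerivAt (fun t => V (φ t)) (lieDerivIter f V 1 y) 0 := by
      have := ((hV.differentiable (by simp)).differentiableAt.hasFDerivAt
        (x := φ 0)).comp_hasDerivAt 0 (hφ' 0 h0mem)
      rw [hφ0] at this
      exact this
    rw [hasDerivAt_iff_tendsto_slope] at h0
    have h1 : Filter.Tendsto (slope (fun t => V (φ t)) 0) (nhdsWithin 0 (Ioi 0))
        (nhds (lieDerivIter f V 1 y)) :=
      h0.mono_left (nhdsWithin_mono 0 (fun z hz => ne_of_gt hz))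
    refine le_of_tendsto h1 ?_
    filter_upwards [Ioo_mem_nhdsGT_of_mem (Set.mem_Ico.mpr ⟨le_refl (0:ℝ), hε⟩)] with s hs
    have hVle : V (φ s) ≤ V (φ 0) :=
      hmono (left_mem_Ico.mpr hε) ⟨hs.1.le, hs.2⟩ hs.1.le
    rw [slope_def_field]
    simp only [div_nonpos_iff]
    exact Or.inr ⟨by simpa using sub_nonpos.mpr hVle, by linarith [hs.1]⟩
  ext x
  simp only [mem_setOf_eq]
  constructor
  · intro hx k
    exact hx (2*k+1) (by omega)
  · intro hx k hk
    obtain ⟨ε, hε, φ, hφ0, hφ', hmono⟩ := htraj x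
    set u : ℕ → ℝ → ℝ := fun j t => lieDerivIter f V (j+1) (φ t) with hu_def
    have hu : ∀ j, ∀ t ∈ Ioo (-ε) ε, HasDerivAt (u j) (u (j+1) t) t := by
      intro j t ht
      have := (((lieDerivIter_contDiff hf hV (j+1)).differentiable (by simp)).differentiableAt.hasFDerivAt
        (x := φ t)).comp_hasDerivAt t (hφ' t ht)
      exact this
    have hneg : ∀ t ∈ Ioo (-ε) ε, u 0 t ≤ 0 := fun t _ => hL1 (φ t)
    have heven : ∀ j, u (2*j) 0 = 0 := by
      intro j
      simp only [hu_def, hφ0]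
      exact hx j
    -- negated family
    set v : ℕ → ℝ → ℝ := fun j s => (-1:ℝ)^j * u j (-s) with hv_def
    have hv : ∀ j, ∀ t ∈ Ioo (-ε) ε, HasDerivAt (v j) (v (j+1) t) t := by
      intro j t ht
      have hnt : -t ∈ Ioo (-ε) ε := ⟨by linarith [ht.2], by linarith [ht.1]⟩
      have h1 : HasDerivAt (fun s : ℝ => u j (-s)) (u (j+1) (-t) * (-1)) t :=
        (hu j (-t) hnt).comp t (by simpa using hasDerivAt_neg t)
      have h2 := h1.const_mul ((-1:ℝ)^j)
      convert h2 using 1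
      · rfl
      · rfl
      simp only [hv_def, pow_succ]
      ring
    have hvneg : ∀ t ∈ Ioo (-ε) ε, v 0 t ≤ 0 := by
      intro t ht
      have hnt : -t ∈ Ioo (-ε) ε := ⟨by linarith [ht.2], by linarith [ht.1]⟩
      simpa [hv_def] using hneg (-t) hnt
    -- all u j 0 = 0
    have hall : ∀ j, u j 0 = 0 := by
      by_contra hcon
      push_neg at hcon
      have hex : ∃ j, u j 0 ≠ 0 := hcon
      set m := Nat.find hex with hm_def
      have hmspec : u m 0 ≠ 0 := Nat.find_spec hex
      have hmlt : ∀ j < m, u j 0 = 0 := fun j hj => not_not.mp (Nat.find_min hex hj)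
      have hmodd : ¬ Even m := by
        intro ⟨r, hr⟩
        exact hmspec (by rw [show m = 2*r by omega]; exact heven r)
      have h1 : u m 0 ≤ 0 := keyB u ε hε hu hneg m hmlt
      have h2 : v m 0 ≤ 0 := by
        refine keyB v ε hε hv hvneg m ?_
        intro j hj
        simp [hv_def, hmlt j hj]
      have h3 : (-1:ℝ)^m = -1 := Odd.neg_one_pow (Nat.not_even_iff_odd.mp hmodd)
      have : v m 0 = -(u m 0) := by simp [hv_def, h3]
      rw [this] at h2
      exact hmspec (le_antisymm h1 (by linarith))
    obtain ⟨j, rfl⟩ : ∃ j, k = j + 1 := ⟨k - 1, by omega⟩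
    have := hall j
    simp only [hu_def, hφ0] at this
    exact this
end

section
/- Let F : ℝ^d → ℝ be a function with F(0)=0 whose derivatives vanish at 0 up to order l−1 and whose l-th derivative D^l F(0) ≠ 0. Let (x_n) be a sequence in ℝ^d \ {0} converging to 0 with F(x_n) = 0 for all n, and suppose x_n/‖x_n‖ converges to x. Then D^l F(0)·[x,…,x] = 0 (the l-th derivative applied l times to x vanishes). -/
/-!
Along the ray `t ↦ t • xₙ` the Taylor polynomial of `F` of degree `l - 1` at `0` vanishes, so
Taylor's theorem with the Lagrange remainder gives `ξₙ ∈ (0, 1)` with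
`D^l F(ξₙ xₙ)[xₙ]^l = l! F(xₙ) = 0`. By homogeneity the same holds for `xₙ / ‖xₙ‖`, and
continuity of `D^l F` at `0` lets `n → ∞`.
-/

open Filter Topology

theorem ContDiffAt.iteratedDeriv_comp_smul_const {𝕜 E G : Type*} [NontriviallyNormedField 𝕜]
    [NormedAddCommGroup E] [NormedSpace 𝕜 E] [NormedAddCommGroup G] [NormedSpace 𝕜 G]
    {f : E → G} {v : E} {t : 𝕜} {i : ℕ} (hf : ContDiffAt 𝕜 i f (t • v)) :
    iteratedDeriv i (fun s : 𝕜 => f (s • v)) t = iteratedFDeriv 𝕜 i f (t • v) (fun _ => v) := by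
  obtain ⟨u, hu, hfu⟩ := hf.contDiffOn le_rfl (by simp)
  obtain ⟨s, hsu, hs, hts⟩ := mem_nhds_iff.1 hu
  let L : 𝕜 →L[𝕜] E := (ContinuousLinearMap.id 𝕜 𝕜).smulRight v
  have hLs : IsOpen (L ⁻¹' s) := hs.preimage L.continuous
  have hcomp := L.iteratedFDerivWithin_comp_right (hfu.mono hsu) hs.uniqueDiffOn
    hLs.uniqueDiffOn hts le_rfl
  have hLt : L t = t • v := by simp [L]
  rw [hLt, iteratedFDerivWithin_of_isOpen i hLs hts, iteratedFDerivWithin_of_isOpen i hs hts]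
    at hcomp
  rw [iteratedDeriv_eq_iteratedFDeriv]
  exact congr($hcomp fun _ => 1).trans (by simp [L])

theorem exists_iteratedFDeriv_smul_apply_eq_zero {E : Type*} [NormedAddCommGroup E]
    [NormedSpace ℝ E] {f : E → ℝ} {k : ℕ} {v : E}
    (hf : ∀ t ∈ Set.Icc (0 : ℝ) 1, ContDiffAt ℝ (k + 1) f (t • v))
    (hflat : ∀ m ≤ k, iteratedFDeriv ℝ m f 0 = 0) (hfv : f v = 0) :
    ∃ ξ ∈ Set.Ioo (0 : ℝ) 1, iteratedFDeriv ℝ (k + 1) f (ξ • v) (fun _ => v) = 0 := by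
  set g : ℝ → ℝ := fun t => f (t • v)
  have hg : ∀ t ∈ Set.Icc (0 : ℝ) 1, ContDiffAt ℝ (k + 1) g t := fun t ht =>
    (hf t ht).comp t (contDiffAt_id.smul_const v)
  have hI : Set.uIcc (0 : ℝ) 1 = Set.Icc 0 1 := Set.uIcc_of_le zero_le_one
  obtain ⟨ξ, hξ, hTaylor⟩ := taylor_mean_remainder_lagrange_iteratedDeriv (f := g) (n := k)
    zero_ne_one (by rw [hI]; exact fun t ht => (hg t ht).contDiffWithinAt)
  rw [Set.uIoo_of_le zero_le_one] at hξ
  rw [hI] at hTaylor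
  have hpoly : taylorWithinEval g k (Set.Icc 0 1) 0 1 = 0 := by
    rw [taylor_within_apply]
    refine Finset.sum_eq_zero fun m hm => ?_
    have hmk : m ≤ k := Nat.lt_succ_iff.1 (Finset.mem_range.1 hm)
    have hm : (m : WithTop ℕ∞) ≤ k + 1 := by exact_mod_cast hmk.trans k.le_succ
    rw [iteratedDerivWithin_eq_iteratedDeriv (uniqueDiffOn_Icc zero_lt_one)
      ((hg 0 ⟨le_rfl, zero_le_one⟩).of_le hm) ⟨le_rfl, zero_le_one⟩,
      ((hf 0 ⟨le_rfl, zero_le_one⟩).of_le hm).iteratedDeriv_comp_smul_const,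
      zero_smul, hflat m hmk]
    simp
  have hg1 : g 1 = 0 := by simpa [g] using hfv
  refine ⟨ξ, hξ, ?_⟩
  rw [← ContDiffAt.iteratedDeriv_comp_smul_const (hf ξ (Set.Ioo_subset_Icc_self hξ))]
  simpa [hg1, hpoly, Nat.factorial_ne_zero] using hTaylor.symm

theorem stmt8_general {d : ℕ} (F : (Fin d → ℝ) → ℝ) (l : ℕ) (hl : 0 < l)
    (hF : ContDiffAt ℝ l F 0)
    (hvanish : ∀ j, j < l → iteratedFDeriv ℝ j F 0 = 0)
    (x : Fin d → ℝ) (xn : ℕ → (Fin d → ℝ))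
    (hlim : Tendsto xn atTop (𝓝 0))
    (hFxn : ∀ n, F (xn n) = 0)
    (hdir : Tendsto (fun n => ‖xn n‖⁻¹ • xn n) atTop (𝓝 x)) :
    iteratedFDeriv ℝ l F 0 (fun _ => x) = 0 := by
  obtain ⟨k, rfl⟩ := Nat.exists_eq_add_one_of_ne_zero hl.ne'
  obtain ⟨r, hr, hreg⟩ := Metric.eventually_nhds_iff_ball.1 (hF.eventually (by simp))
  have hsmall : ∀ᶠ n in atTop, ‖xn n‖ < r := by
    simpa using (tendsto_norm_zero.comp hlim).eventually_lt_const hr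
  have hmean : ∀ᶠ n in atTop, ∃ t ∈ Set.Ioo (0 : ℝ) 1,
      iteratedFDeriv ℝ (k + 1) F (t • xn n) (fun _ => xn n) = 0 := by
    filter_upwards [hsmall] with n hn
    refine exists_iteratedFDeriv_smul_apply_eq_zero (fun t ht => hreg _ ?_)
      (fun m hm => hvanish m (Nat.lt_succ_of_le hm)) (hFxn n)
    rw [mem_ball_zero_iff, norm_smul, Real.norm_of_nonneg ht.1]
    exact (mul_le_of_le_one_left (norm_nonneg _) ht.2).trans_lt hn
  obtain ⟨ξ, hξ⟩ := hmean.choice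
  have hbase : Tendsto (fun n => ξ n • xn n) atTop (𝓝 0) := by
    refine IsBoundedUnder.smul_tendsto_zero (isBoundedUnder_of_eventually_le (a := 1) ?_) hlim
    filter_upwards [hξ] with n hn
    simpa [abs_of_pos hn.1.1] using hn.1.2.le
  have hD := ((hF.continuousAt_iteratedFDeriv le_rfl).tendsto.comp hbase).prodMk_nhds
    (tendsto_pi_nhds.2 fun _ : Fin (k + 1) => hdir)
  refine tendsto_nhds_unique ((continuous_eval.tendsto _).comp hD) (tendsto_const_nhds.congr' ?_)
  filter_upwards [hξ] with n hn
  simp [ContinuousMultilinearMap.map_smul_univ _ (fun _ => ‖xn n‖⁻¹) (fun _ => xn n), hn.2]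

theorem stmt8 {d : ℕ} (F : (Fin d → ℝ) → ℝ) (l : ℕ) (hl : 0 < l)
    (hF : ContDiffAt ℝ l F 0) (hF0 : F 0 = 0)
    (hvanish : ∀ j, j < l → iteratedFDeriv ℝ j F 0 = 0)
    (hne : iteratedFDeriv ℝ l F 0 ≠ 0)
    (x : Fin d → ℝ) (xn : ℕ → (Fin d → ℝ))
    (hxn0 : ∀ n, xn n ≠ 0) (hlim : Tendsto xn atTop (𝓝 0))
    (hFxn : ∀ n, F (xn n) = 0)
    (hdir : Tendsto (fun n => ‖xn n‖⁻¹ • xn n) atTop (𝓝 x)) :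
    iteratedFDeriv ℝ l F 0 (fun _ => x) = 0 :=
  stmt8_general F l hl hF hvanish x xn hlim hFxn hdir
end

section
/- Let 𝓜₁, 𝓜₂ be subsets of ℝ^d containing 0, and let M₁, M₂ be closed cones in ℝ^d such that every limit x of a sequence x_n/‖x_n‖ with x_n ∈ 𝓜_i \ {0}, x_n → 0, belongs to M_i (i=1,2). If M₁ ∩ M₂ = {0}, then 0 is isolated in 𝓜₁ ∩ 𝓜₂: there is a neighborhood 𝓥 of 0 with 𝓜₁ ∩ 𝓜₂ ∩ 𝓥 = {0}. -/
open Filter Topology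

theorem stmt9 {d : ℕ} (M1 M2 : Set (Fin d → ℝ)) (K1 K2 : Set (Fin d → ℝ))
    (hM1 : (0 : Fin d → ℝ) ∈ M1) (hM2 : (0 : Fin d → ℝ) ∈ M2)
    (hK1closed : IsClosed K1) (hK2closed : IsClosed K2)
    (hK1cone : ∀ c : ℝ, 0 < c → ∀ x ∈ K1, c • x ∈ K1)
    (hK2cone : ∀ c : ℝ, 0 < c → ∀ x ∈ K2, c • x ∈ K2)
    (htan1 : ∀ (x : Fin d → ℝ) (xn : ℕ → (Fin d → ℝ)),
      (∀ n, xn n ∈ M1 \ {0}) → Tendsto xn atTop (𝓝 0) →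
      Tendsto (fun n => ‖xn n‖⁻¹ • xn n) atTop (𝓝 x) → x ∈ K1)
    (htan2 : ∀ (x : Fin d → ℝ) (xn : ℕ → (Fin d → ℝ)),
      (∀ n, xn n ∈ M2 \ {0}) → Tendsto xn atTop (𝓝 0) →
      Tendsto (fun n => ‖xn n‖⁻¹ • xn n) atTop (𝓝 x) → x ∈ K2)
    (hinter : K1 ∩ K2 = {0}) :
    ∃ 𝓥 ∈ 𝓝 (0 : Fin d → ℝ), M1 ∩ M2 ∩ 𝓥 = {0} := by
  by_contra h
  push_neg at h
  -- build a sequence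
  have hseq : ∀ n : ℕ, ∃ y : Fin d → ℝ, y ∈ M1 ∧ y ∈ M2 ∧ y ≠ 0 ∧
      ‖y‖ < 1 / (n + 1 : ℝ) := by
    intro n
    have hball : Metric.ball (0 : Fin d → ℝ) (1 / (n + 1 : ℝ)) ∈ 𝓝 (0 : Fin d → ℝ) :=
      Metric.ball_mem_nhds _ (by positivity)
    have hne := h _ hball
    have hsub : {(0 : Fin d → ℝ)} ⊆ M1 ∩ M2 ∩ Metric.ball 0 (1 / (n + 1 : ℝ)) := by
      intro z hz
      simp only [Set.mem_singleton_iff] at hz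
      subst hz
      exact ⟨⟨hM1, hM2⟩, Metric.mem_ball_self (by positivity)⟩
    obtain ⟨y, hy, hy0⟩ :=
      Set.exists_of_ssubset (ssubset_of_subset_of_ne hsub (Ne.symm hne))
    refine ⟨y, hy.1.1, hy.1.2, hy0, ?_⟩
    simpa [dist_eq_norm] using hy.2
  choose x hx1 hx2 hx0 hxn using hseq
  have hxto0 : Tendsto x atTop (𝓝 0) := by
    rw [tendsto_iff_norm_sub_tendsto_zero]
    refine squeeze_zero (g := fun n : ℕ => 1 / (n + 1 : ℝ)) (fun n => norm_nonneg _)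
      (fun n => by simpa using (hxn n).le) tendsto_one_div_add_atTop_nhds_zero_nat
  set u : ℕ → (Fin d → ℝ) := fun n => ‖x n‖⁻¹ • x n with hu
  have husphere : ∀ n, u n ∈ Metric.sphere (0 : Fin d → ℝ) 1 := by
    intro n
    simp only [Metric.mem_sphere, dist_zero_right, hu, norm_smul, norm_inv, norm_norm]
    rw [inv_mul_cancel₀ (norm_ne_zero_iff.mpr (hx0 n))]
  obtain ⟨z, hz, φ, hφ, hconv⟩ :=
    (isCompact_sphere (0 : Fin d → ℝ) 1).tendsto_subseq husphere
  have hsub0 : Tendsto (x ∘ φ) atTop (𝓝 0) :=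
    hxto0.comp hφ.tendsto_atTop
  have hz1 : z ∈ K1 := htan1 z (x ∘ φ) (fun n => ⟨hx1 _, hx0 _⟩) hsub0 hconv
  have hz2 : z ∈ K2 := htan2 z (x ∘ φ) (fun n => ⟨hx2 _, hx0 _⟩) hsub0 hconv
  have : z = 0 := by
    have : z ∈ K1 ∩ K2 := ⟨hz1, hz2⟩
    rwa [hinter, Set.mem_singleton_iff] at this
  rw [this] at hz
  simp at hz
end

section
/- Let A be a real d×d matrix that is semi-simple (diagonalizable over ℂ) with all eigenvalues purely imaginary. Then there exists a sequence (t_k) of reals increasing to +∞ such that e^{t_k A} converges to the identity matrix. -/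
open Matrix Filter Topology

/-!
Conjugating by `P`, `exp A` becomes `diagonal (exp ∘ μ)`, whose entries lie on the unit circle, so
the powers `exp (k • A) = (exp A) ^ k` are governed by the powers of a single element of the
compact group `Fin d → Circle`. In a compact group `1` is a cluster point of the powers of any
element; along a subsequence `k_j → ∞` the diagonal factor, hence `exp (k_j • A)`, tends to `1`.
-/

namespace Matrix

theorem tendsto_of_tendsto_map_algebraMap {n ι : Type*} {l : Filter ι} {f : ι → Matrix n n ℝ}
    {M : Matrix n n ℝ}
    (h : Tendsto (fun k => (f k).map (algebraMap ℝ ℂ)) l (𝓝 (M.map (algebraMap ℝ ℂ)))) :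
    Tendsto f l (𝓝 M) :=
  (Complex.isometry_ofReal.isEmbedding.matrix_map (m := n) (n := n)).tendsto_nhds_iff.2 h

variable {n : Type*} [Fintype n] [DecidableEq n]

theorem exp_map_algebraMap (M : Matrix n n ℝ) :
    (NormedSpace.exp M).map (algebraMap ℝ ℂ) = NormedSpace.exp (M.map (algebraMap ℝ ℂ)) :=
  open scoped Norms.Operator in
  NormedSpace.map_exp (algebraMap ℝ ℂ).mapMatrix
    (continuous_id.matrix_map Complex.continuous_ofReal) M

theorem exp_map_algebraMap_of_eq_conj_diagonal {A : Matrix n n ℝ} {P : Matrix n n ℂ}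
    (hP : IsUnit P) {μ : n → ℂ} (hA : A.map (algebraMap ℝ ℂ) = P * diagonal μ * P⁻¹) :
    (NormedSpace.exp A).map (algebraMap ℝ ℂ) =
      P * diagonal (fun i => Complex.exp (μ i)) * P⁻¹ := by
  rw [exp_map_algebraMap, hA, exp_conj P _ hP, exp_diagonal, Pi.exp_def, Complex.exp_eq_exp_ℂ]

theorem exists_strictMono_tendsto_pow_one_of_conj_diagonal {M : Matrix n n ℝ} {P : Matrix n n ℂ}
    (hP : IsUnit P) {w : n → ℂ} (hw : ∀ i, ‖w i‖ = 1)
    (hM : M.map (algebraMap ℝ ℂ) = P * diagonal w * P⁻¹) :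
    ∃ φ : ℕ → ℕ, StrictMono φ ∧ Tendsto (fun k => M ^ φ k) atTop (𝓝 1) := by
  let g : n → Circle := fun i => ⟨w i, mem_sphere_zero_iff_norm.2 (hw i)⟩
  obtain ⟨φ, hφ, hg⟩ := (mapClusterPt_one_atTop_pow g).tendsto_subseq
  refine ⟨φ, hφ, tendsto_of_tendsto_map_algebraMap ?_⟩
  have hpow (k : ℕ) :
      (M ^ k).map (algebraMap ℝ ℂ) = P * diagonal (fun i => ((g ^ k) i : ℂ)) * P⁻¹ := by
    obtain ⟨u, rfl⟩ := hP
    rw [← RingHom.mapMatrix_apply, map_pow, RingHom.mapMatrix_apply, hM, ← coe_units_inv,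
      Units.conj_pow, diagonal_pow]
    rfl
  have hcont : Continuous fun g : n → Circle => P * diagonal (fun i => (g i : ℂ)) * P⁻¹ := by
    fun_prop
  have hlim := (hcont.tendsto 1).comp hg
  simp only [Function.comp_def, ← hpow, Pi.one_apply, Circle.coe_one, diagonal_one, mul_one,
    mul_nonsing_inv P ((isUnit_iff_isUnit_det P).1 hP)] at hlim
  rwa [Matrix.map_one _ (_root_.map_zero _) (_root_.map_one _)]

end Matrix

theorem stmt11 {d : ℕ} (A : Matrix (Fin d) (Fin d) ℝ)
    (hdiag : ∃ P : Matrix (Fin d) (Fin d) ℂ, IsUnit P.det ∧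
      ∃ μ : Fin d → ℂ, (∀ i, (μ i).re = 0) ∧
        A.map (algebraMap ℝ ℂ) = P * Matrix.diagonal μ * P⁻¹) :
    ∃ t : ℕ → ℝ, StrictMono t ∧ Tendsto t atTop atTop ∧
      Tendsto (fun k => NormedSpace.exp (t k • A)) atTop
        (𝓝 (1 : Matrix (Fin d) (Fin d) ℝ)) := by
  obtain ⟨P, hPdet, μ, hμ, hA⟩ := hdiag
  have hP : IsUnit P := (isUnit_iff_isUnit_det P).2 hPdet
  obtain ⟨φ, hφ, hlim⟩ := exists_strictMono_tendsto_pow_one_of_conj_diagonal hP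
    (fun i => by rw [Complex.norm_exp, hμ i, Real.exp_zero])
    (exp_map_algebraMap_of_eq_conj_diagonal hP hA)
  refine ⟨fun k => φ k, Nat.strictMono_cast.comp hφ,
    tendsto_natCast_atTop_atTop.comp hφ.tendsto_atTop, ?_⟩
  simpa only [Nat.cast_smul_eq_nsmul, exp_nsmul] using hlim
end

section
/- Let A be a real d×d matrix, semi-simple with purely imaginary eigenvalues, and let V : ℝ^d → ℝ be a continuous function such that t ↦ V(e^{tA}x) is nonincreasing for every x. Then V(e^{tA}x) = V(x) for all t ≥ 0 and all x. -/
open Matrix Filter Topology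

/-!
Complexifying and diagonalising, `e^{tA} = P diag(e^{t μᵢ}) P⁻¹` with `|e^{t μᵢ}| = 1`, so the
flow `t ↦ e^{tA}` stays in a compact set of matrices. Two nearby terms `e^{mA}`, `e^{nA}` of a
convergent subsequence of `(e^{nA})` then show that `e^{(n - m)A}` is close to the identity for
arbitrarily large `n - m`. Along these return times `V(e^{sA}x) → V(x)`, which together with
monotonicity pins `V(e^{tA}x)` to `V(x)`.
-/

open NormedSpace

theorem Antitone.eq_of_le_of_tendsto_comp {ι α β : Type*} [Preorder α] [PartialOrder β]
    [TopologicalSpace β] [OrderClosedTopology β] {f : α → β} (hf : Antitone f)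
    {l : Filter ι} [l.NeBot] {s : ι → α} (hs : Tendsto s l atTop) {a : α}
    (hfs : Tendsto (f ∘ s) l (𝓝 (f a))) {t : α} (ht : a ≤ t) : f t = f a :=
  le_antisymm (hf ht) <|
    _root_.le_of_tendsto hfs <| (hs.eventually_ge_atTop t).mono fun _ h ↦ hf h

theorem Units.exists_tendsto_pow_nhds_one {R : Type*} [NormedRing R] [ProperSpace R] (u : Rˣ)
    {C : ℝ} (hC : ∀ n : ℤ, ‖((u ^ n : Rˣ) : R)‖ ≤ C) :
    ∃ n : ℕ → ℕ, Tendsto n atTop atTop ∧ Tendsto (fun k ↦ (u : R) ^ n k) atTop (𝓝 1) := by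
  set v : ℕ → R := fun m ↦ ((u ^ m : Rˣ) : R)
  obtain ⟨B, -, φ, hφ, hB⟩ := (isCompact_closedBall (0 : R) C).tendsto_subseq (x := v)
    fun m ↦ by simpa [v] using hC m
  refine ⟨fun k ↦ φ (2 * k) - φ k, ?_, ?_⟩
  · refine tendsto_atTop_mono (fun k ↦ ?_) tendsto_id
    have := hφ.add_le_nat k k
    rw [two_mul, id]
    omega
  · have hgap : Tendsto (fun k ↦ v (φ (2 * k)) - v (φ k)) atTop (𝓝 0) := by
      simpa using (hB.comp (tendsto_id.const_mul_atTop' two_pos)).sub hB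
    have hsplit : ∀ k, ((u ^ (φ (2 * k) - φ k) : Rˣ) : R) - 1 =
        ((u ^ (-(φ k : ℤ)) : Rˣ) : R) * (v (φ (2 * k)) - v (φ k)) := fun k ↦ by
      have hpow : u ^ (φ (2 * k) - φ k) = u ^ (-(φ k : ℤ)) * u ^ φ (2 * k) := by
        rw [← zpow_natCast, ← zpow_natCast, ← _root_.zpow_add,
          Nat.cast_sub (hφ.monotone (by omega)), neg_add_eq_sub]
      have hone : 1 = u ^ (-(φ k : ℤ)) * u ^ φ k := by
        rw [← zpow_natCast, ← _root_.zpow_add, neg_add_cancel, zpow_zero]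
      rw [hpow, mul_sub]
      conv_lhs => rw [← Units.val_one, hone]
      simp only [v, Units.val_mul]
    refine tendsto_sub_nhds_zero_iff.1 ?_
    simp only [← Units.val_pow_eq_pow_val]
    refine squeeze_zero_norm (fun k ↦ ?_) (by simpa using hgap.norm.const_mul C)
    rw [hsplit]
    exact (norm_mul_le _ _).trans (mul_le_mul_of_nonneg_right (hC _) (norm_nonneg _))

section LinftyOp

attribute [local instance] Matrix.linftyOpNormedAddCommGroup Matrix.linftyOpNormedRing
  Matrix.linftyOpNormedAlgebra

variable {m n : Type*} [Fintype m] [Fintype n]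

theorem Matrix.linfty_opNorm_map_algebraMap (M : Matrix m n ℝ) :
    ‖M.map (algebraMap ℝ ℂ)‖ = ‖M‖ := by
  simp [Matrix.linfty_opNorm_def]

variable [DecidableEq n]

theorem Matrix.map_algebraMap_exp (M : Matrix n n ℝ) :
    (exp M).map (algebraMap ℝ ℂ) = exp (M.map (algebraMap ℝ ℂ)) :=
  map_exp (algebraMap ℝ ℂ).mapMatrix (continuous_id.matrix_map Complex.continuous_ofReal) M

theorem Matrix.map_algebraMap_exp_smul_of_eq_conj_diagonal {A : Matrix n n ℝ}
    {P : Matrix n n ℂ} (hP : IsUnit P) {μ : n → ℂ}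
    (hA : A.map (algebraMap ℝ ℂ) = P * diagonal μ * P⁻¹) (t : ℝ) :
    (exp (t • A)).map (algebraMap ℝ ℂ) = P * diagonal (fun i ↦ Complex.exp (t * μ i)) * P⁻¹ := by
  have hsmul : (t • A).map (algebraMap ℝ ℂ) = P * diagonal (fun i ↦ t * μ i) * P⁻¹ := by
    rw [Matrix.map_smul' _ _ _ (map_mul _), hA]
    change _ = P * diagonal ((t : ℂ) • μ) * P⁻¹
    rw [diagonal_smul, mul_smul_comm, smul_mul_assoc]
    rfl
  rw [map_algebraMap_exp, hsmul, Matrix.exp_conj _ _ hP, exp_diagonal]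
  congr
  funext i
  simp [Complex.exp_eq_exp_ℂ]

theorem Matrix.norm_exp_smul_le_of_eq_conj_diagonal {A : Matrix n n ℝ}
    {P : Matrix n n ℂ} (hP : IsUnit P) {μ : n → ℂ} (hμ : ∀ i, (μ i).re = 0)
    (hA : A.map (algebraMap ℝ ℂ) = P * diagonal μ * P⁻¹) (t : ℝ) :
    ‖exp (t • A)‖ ≤ ‖P‖ * ‖P⁻¹‖ := by
  have hD : ‖diagonal (fun i ↦ Complex.exp (t * μ i))‖ ≤ 1 := by
    rw [linfty_opNorm_diagonal]
    refine pi_norm_le_iff_of_nonneg zero_le_one |>.2 fun i ↦ ?_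
    simp [Complex.norm_exp, hμ i]
  calc ‖exp (t • A)‖
      = ‖P * diagonal (fun i ↦ Complex.exp (t * μ i)) * P⁻¹‖ := by
        rw [← map_algebraMap_exp_smul_of_eq_conj_diagonal hP hA, linfty_opNorm_map_algebraMap]
    _ ≤ ‖P‖ * ‖diagonal (fun i ↦ Complex.exp (t * μ i))‖ * ‖P⁻¹‖ := norm_mul₃_le
    _ ≤ ‖P‖ * 1 * ‖P⁻¹‖ := by gcongr
    _ = ‖P‖ * ‖P⁻¹‖ := by rw [mul_one]

theorem Matrix.exists_tendsto_exp_smul_nhds_one (A : Matrix n n ℝ) {C : ℝ}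
    (hC : ∀ t : ℝ, ‖exp (t • A)‖ ≤ C) :
    ∃ s : ℕ → ℝ, Tendsto s atTop atTop ∧ Tendsto (fun k ↦ exp (s k • A)) atTop (𝓝 1) := by
  obtain ⟨N, hN, hrec⟩ := (isUnit_exp A).unit.exists_tendsto_pow_nhds_one (C := C) fun z ↦ by
    rw [coe_units_zpow, IsUnit.unit_spec, ← exp_zsmul, ← Int.cast_smul_eq_zsmul ℝ]
    exact hC z
  refine ⟨fun k ↦ N k, tendsto_natCast_atTop_atTop.comp hN, ?_⟩
  refine hrec.congr fun k ↦ ?_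
  rw [IsUnit.unit_spec, Nat.cast_smul_eq_nsmul, Matrix.exp_nsmul]

theorem Matrix.exists_tendsto_exp_smul_nhds_one_of_eq_conj_diagonal {A : Matrix n n ℝ}
    {P : Matrix n n ℂ} (hP : IsUnit P) {μ : n → ℂ} (hμ : ∀ i, (μ i).re = 0)
    (hA : A.map (algebraMap ℝ ℂ) = P * diagonal μ * P⁻¹) :
    ∃ s : ℕ → ℝ, Tendsto s atTop atTop ∧ Tendsto (fun k ↦ exp (s k • A)) atTop (𝓝 1) :=
  A.exists_tendsto_exp_smul_nhds_one (norm_exp_smul_le_of_eq_conj_diagonal hP hμ hA)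

end LinftyOp

theorem stmt12 {d : ℕ} (A : Matrix (Fin d) (Fin d) ℝ)
    (hdiag : ∃ P : Matrix (Fin d) (Fin d) ℂ, IsUnit P.det ∧
      ∃ μ : Fin d → ℂ, (∀ i, (μ i).re = 0) ∧
        A.map (algebraMap ℝ ℂ) = P * Matrix.diagonal μ * P⁻¹)
    (V : (Fin d → ℝ) → ℝ) (hV : Continuous V)
    (hmono : ∀ x : Fin d → ℝ, Antitone (fun t : ℝ =>
      V ((NormedSpace.exp (t • A)).mulVec x))) :
    ∀ t : ℝ, 0 ≤ t → ∀ x : Fin d → ℝ,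
      V ((NormedSpace.exp (t • A)).mulVec x) = V x := by
  obtain ⟨P, hP, μ, hμ, hA⟩ := hdiag
  obtain ⟨s, hs, hrec⟩ := exists_tendsto_exp_smul_nhds_one_of_eq_conj_diagonal
    ((isUnit_iff_isUnit_det P).2 hP) hμ hA
  intro t ht x
  have hVx : Continuous fun M : Matrix (Fin d) (Fin d) ℝ ↦ V (M *ᵥ x) :=
    hV.comp (continuous_id.matrix_mulVec continuous_const)
  have hx : Tendsto (fun k ↦ V (exp (s k • A) *ᵥ x)) atTop (𝓝 (V (exp ((0 : ℝ) • A) *ᵥ x))) := by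
    rw [zero_smul, exp_zero]
    exact (hVx.tendsto 1).comp hrec
  simpa using (hmono x).eq_of_le_of_tendsto_comp hs hx ht
end
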